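/- arXiv:2509.01936 — 2 statements merged into one kernel-verified Lean document; each statement's English description precedes it below -/
import Mathlib

section
/- Quantile property: let (θ̂, β̂, ξ̂, ξ̂*) be an optimal solution of the convex quantile regression problem minimizing (1/2)Σ_i‖β_i‖² + CΣ_i(τξ_i + (1−τ)ξ*_i) subject to y_i − θ_i ≤ (1−τ)ε + ξ_i, θ_i − y_i ≤ τε + ξ*_i, convexity constraints θ_i + ⟨β_i, x_j − x_i⟩ ≤ θ_j, and ξ, ξ* ≥ 0. Let n₋ = #{i : ξ̂*_i > 0} and n₊ = #{i : ξ̂_i > 0}. By KKT/dual feasibility, the dual multipliers λ_i ∈ [0, τC] of the first constraint and λ*_i ∈ [0, (1−τ)C] of the second satisfy complementary slackness with λ_i = τC when ξ̂_i > 0 and λ*_i = (1−τ)C when ξ̂*_i > 0, and Σ_i λ_i = Σ_i λ*_i (summing the stationarity conditions −λ_i + λ*_i + Σ_j μ_{ij} − Σ_j μ_{ji} = 0 over i with μ ≥ 0). Conclude n₋/n ≤ τ and n₊/n ≤ 1 − τ. -/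
/-!
Summing the stationarity conditions over `i`, the multipliers `μ` cancel, so `∑ λ = ∑ λ*`.
Where `ξ̂ᵢ > 0` the multiplier `λᵢ` sits at its bound `τC`, so `λ*ᵢ = 0` by `λᵢ λ*ᵢ = 0`; hence
`n₊ τC ≤ ∑ λ = ∑ λ* ≤ (n - n₊)(1 - τ)C`, i.e. `n₊ ≤ (1 - τ) n`. Symmetrically `n₋ ≤ τ n`.
-/

open Finset

theorem Finset.sum_eq_sum_of_forall_neg_add_add_sub_eq_zero {ι M : Type*} [Fintype ι]
    [AddCommGroup M] {f g : ι → M} {μ : ι → ι → M}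
    (h : ∀ i, -f i + g i + ∑ j, μ i j - ∑ j, μ j i = 0) :
    ∑ i, f i = ∑ i, g i := by
  have hsum : ∑ i, (-f i + g i + ∑ j, μ i j - ∑ j, μ j i) = 0 := sum_eq_zero fun i _ ↦ h i
  rw [sum_sub_distrib, sum_add_distrib, sum_add_distrib, sum_neg_distrib, sum_comm (f := μ),
    add_sub_cancel_right, neg_add_eq_zero] at hsum
  exact hsum

section Saturation

variable {ι R : Type*} [Fintype ι] [Field R] [LinearOrder R] [IsStrictOrderedRing R]

theorem Finset.card_mul_le_sum_of_eq_on {a : ι → R} {A : R} {s : Finset ι}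
    (ha : ∀ i, 0 ≤ a i) (hs : ∀ i ∈ s, a i = A) :
    #s * A ≤ ∑ i, a i :=
  calc #s * A = ∑ i ∈ s, a i := by rw [sum_congr rfl hs, sum_const, nsmul_eq_mul]
    _ ≤ ∑ i, a i := sum_le_sum_of_subset_of_nonneg (subset_univ s) fun i _ _ ↦ ha i

variable [DecidableEq ι]

theorem Finset.sum_le_card_compl_mul_of_eq_zero_on {b : ι → R} {B : R} {s : Finset ι}
    (hb : ∀ i, b i ≤ B) (hs : ∀ i ∈ s, b i = 0) :
    ∑ i, b i ≤ #sᶜ * B :=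
  calc ∑ i, b i = ∑ i ∈ sᶜ, b i := by
        rw [← sum_add_sum_compl s, sum_eq_zero hs, zero_add]
    _ ≤ ∑ _i ∈ sᶜ, B := sum_le_sum fun i _ ↦ hb i
    _ = #sᶜ * B := by rw [sum_const, nsmul_eq_mul]

theorem Finset.card_mul_le_card_compl_mul {a b : ι → R} {A B : R} {s : Finset ι}
    (hA : A ≠ 0) (ha : ∀ i, 0 ≤ a i) (hb : ∀ i, b i ≤ B) (hab : ∀ i, a i * b i = 0)
    (hsum : ∑ i, a i = ∑ i, b i) (hs : ∀ i ∈ s, a i = A) :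
    #s * A ≤ #sᶜ * B := by
  have hbs : ∀ i ∈ s, b i = 0 := fun i hi ↦ by
    simpa [hs i hi, hA] using hab i
  calc #s * A ≤ ∑ i, a i := card_mul_le_sum_of_eq_on ha hs
    _ = ∑ i, b i := hsum
    _ ≤ #sᶜ * B := sum_le_card_compl_mul_of_eq_zero_on hb hbs

theorem Finset.card_div_le_of_card_mul_le_card_compl_mul {s : Finset ι} {p q C : R}
    (hC : 0 < C) (hpq : p + q = 1) (hq : 0 ≤ q) (h : #s * (p * C) ≤ #sᶜ * (q * C)) :
    (#s : R) / Fintype.card ι ≤ q := by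
  have hcard : (#s : R) + #sᶜ = Fintype.card ι := by exact_mod_cast card_add_card_compl s
  obtain rfl : p = 1 - q := eq_sub_of_add_eq hpq
  have hdef : ((#s : R) - q * Fintype.card ι) * C ≤ 0 := by rw [← hcard]; linarith
  have hle : (#s : R) ≤ q * Fintype.card ι := sub_nonpos.1 (nonpos_of_mul_nonpos_left hdef hC)
  exact div_le_of_le_mul₀ (Nat.cast_nonneg _) hq hle

end Saturation

theorem quantile_property_general
    (n : ℕ) (τ C : ℝ) (hτ : τ ∈ Set.Ioo (0:ℝ) 1) (hC : 0 < C)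
    (ξ ξs lam lams : Fin n → ℝ) (μ : Fin n → Fin n → ℝ)
    -- dual feasibility
    (hlam : ∀ i, 0 ≤ lam i ∧ lam i ≤ τ * C)
    (hlams : ∀ i, 0 ≤ lams i ∧ lams i ≤ (1 - τ) * C)
    -- stationarity
    (hstat : ∀ i, -lam i + lams i + (∑ j, μ i j) - (∑ j, μ j i) = 0)
    -- complementary slackness
    (hcs1 : ∀ i, 0 < ξ i → lam i = τ * C)
    (hcs2 : ∀ i, 0 < ξs i → lams i = (1 - τ) * C)
    (hcomp : ∀ i, lam i * lams i = 0) :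
    ((Finset.univ.filter (fun i : Fin n => 0 < ξs i)).card : ℝ) / n ≤ τ ∧
    ((Finset.univ.filter (fun i : Fin n => 0 < ξ i)).card : ℝ) / n ≤ 1 - τ := by
  obtain ⟨hτ0, hτ1⟩ := hτ
  have hsum : ∑ i, lam i = ∑ i, lams i := sum_eq_sum_of_forall_neg_add_add_sub_eq_zero hstat
  constructor
  · have key := card_mul_le_card_compl_mul (s := univ.filter fun i ↦ 0 < ξs i)
      (mul_pos (sub_pos.2 hτ1) hC).ne' (fun i ↦ (hlams i).1) (fun i ↦ (hlam i).2)
      (fun i ↦ by rw [mul_comm, hcomp]) hsum.symm (fun i hi ↦ hcs2 i (mem_filter.1 hi).2)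
    simpa using card_div_le_of_card_mul_le_card_compl_mul hC (sub_add_cancel 1 τ) hτ0.le key
  · have key := card_mul_le_card_compl_mul (s := univ.filter fun i ↦ 0 < ξ i)
      (mul_pos hτ0 hC).ne' (fun i ↦ (hlam i).1) (fun i ↦ (hlams i).2) hcomp hsum
      (fun i hi ↦ hcs1 i (mem_filter.1 hi).2)
    simpa using card_div_le_of_card_mul_le_card_compl_mul hC (add_sub_cancel τ 1)
      (sub_nonneg.2 hτ1.le) key

theorem quantile_property
    (n : ℕ) (hn : 0 < n) (τ C : ℝ) (hτ : τ ∈ Set.Ioo (0:ℝ) 1) (hC : 0 < C)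
    (ξ ξs lam lams : Fin n → ℝ) (μ : Fin n → Fin n → ℝ)
    -- dual feasibility
    (hlam : ∀ i, 0 ≤ lam i ∧ lam i ≤ τ * C)
    (hlams : ∀ i, 0 ≤ lams i ∧ lams i ≤ (1 - τ) * C)
    (hμ : ∀ i j, 0 ≤ μ i j)
    -- stationarity
    (hstat : ∀ i, -lam i + lams i + (∑ j, μ i j) - (∑ j, μ j i) = 0)
    -- complementary slackness
    (hcs1 : ∀ i, 0 < ξ i → lam i = τ * C)
    (hcs2 : ∀ i, 0 < ξs i → lams i = (1 - τ) * C)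
    (hcomp : ∀ i, lam i * lams i = 0) :
    ((Finset.univ.filter (fun i : Fin n => 0 < ξs i)).card : ℝ) / n ≤ τ ∧
    ((Finset.univ.filter (fun i : Fin n => 0 < ξ i)).card : ℝ) / n ≤ 1 - τ :=
  quantile_property_general n τ C hτ hC ξ ξs lam lams μ hlam hlams hstat hcs1 hcs2 hcomp
end

section
/- Abstract quantile counting lemma: let λ, λ* ∈ ℝ^n with 0 ≤ λ_i ≤ τC, 0 ≤ λ*_i ≤ (1−τ)C, λ_i λ*_i = 0 for all i, and Σ_i λ_i = Σ_i λ*_i. If n₊ = #{i : λ_i = τC} and n₋ = #{i : λ*_i = (1−τ)C} (with τC > 0 and (1−τ)C > 0), then n₊ ≤ (1−τ)n and n₋ ≤ τn. -/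
/-!
Each of the `n₊` indices with `λ i = τC` contributes `τC` to `∑ λ` and, by complementarity, forces
`λ* i = 0`, so `∑ λ* ≤ (n - n₊)(1 - τ)C`. Balance then gives `n₊ τC ≤ (n - n₊)(1 - τ)C`, that is
`n₊ C ≤ n (1 - τ) C`. The bound on `n₋` is the same argument with the roles of `λ` and `λ*` swapped.
-/

open Finset

lemma card_filter_eq_mul_add_le {ι : Type*} [Fintype ι] {f g : ι → ℝ} {a b : ℝ} (ha : a ≠ 0)
    (hf : ∀ i, 0 ≤ f i) (hg : ∀ i, g i ≤ b) (hfg : ∀ i, f i * g i = 0)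
    (hsum : ∑ i, f i ≤ ∑ i, g i) :
    (#{i | f i = a} : ℝ) * (a + b) ≤ Fintype.card ι * b := by
  classical
  set A : Finset ι := {i | f i = a}
  have hfA : (#A : ℝ) * a ≤ ∑ i, f i := calc
    (#A : ℝ) * a = ∑ i ∈ A, f i := by
      rw [sum_congr rfl fun i hi => (mem_filter.mp hi).2, sum_const, nsmul_eq_mul]
    _ ≤ ∑ i, f i := sum_le_sum_of_subset_of_nonneg (subset_univ A) fun i _ _ => hf i
  have hg_on_A : ∀ i ∈ A, g i = 0 := fun i hi => by
    simpa [(mem_filter.mp hi).2, ha] using hfg i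
  have hgA : ∑ i, g i ≤ (#Aᶜ : ℝ) * b := calc
    ∑ i, g i = ∑ i ∈ Aᶜ, g i :=
      (sum_subset (subset_univ _) fun i _ hi => hg_on_A i (by simpa using hi)).symm
    _ ≤ #Aᶜ • b := sum_le_card_nsmul _ _ _ fun i _ => hg i
    _ = (#Aᶜ : ℝ) * b := nsmul_eq_mul _ _
  rw [card_compl, Nat.cast_sub (card_le_univ A)] at hgA
  linarith

theorem abstract_quantile_counting_general
    (n : ℕ) (τ C : ℝ) (hτ : τ ∈ Set.Ioo (0:ℝ) 1) (hC : 0 < C)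
    (lam lams : Fin n → ℝ)
    (hlam : ∀ i, 0 ≤ lam i ∧ lam i ≤ τ * C)
    (hlams : ∀ i, 0 ≤ lams i ∧ lams i ≤ (1 - τ) * C)
    (hcomp : ∀ i, lam i * lams i = 0)
    (hbal : ∑ i, lam i = ∑ i, lams i) :
    ((Finset.univ.filter (fun i : Fin n => lam i = τ * C)).card : ℝ) ≤ (1 - τ) * n ∧
    ((Finset.univ.filter (fun i : Fin n => lams i = (1 - τ) * C)).card : ℝ) ≤ τ * n := by
  obtain ⟨hτ0, hτ1⟩ := hτ
  have hplus := card_filter_eq_mul_add_le (mul_pos hτ0 hC).ne' (fun i => (hlam i).1)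
    (fun i => (hlams i).2) hcomp hbal.le
  have hminus := card_filter_eq_mul_add_le (mul_pos (sub_pos.2 hτ1) hC).ne' (fun i => (hlams i).1)
    (fun i => (hlam i).2) (fun i => by rw [mul_comm, hcomp]) hbal.ge
  rw [Fintype.card_fin] at hplus hminus
  exact ⟨le_of_mul_le_mul_right (by linarith) hC, le_of_mul_le_mul_right (by linarith) hC⟩

theorem abstract_quantile_counting
    (n : ℕ) (hn : 1 ≤ n) (τ C : ℝ) (hτ : τ ∈ Set.Ioo (0:ℝ) 1) (hC : 0 < C)
    (lam lams : Fin n → ℝ)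
    (hlam : ∀ i, 0 ≤ lam i ∧ lam i ≤ τ * C)
    (hlams : ∀ i, 0 ≤ lams i ∧ lams i ≤ (1 - τ) * C)
    (hcomp : ∀ i, lam i * lams i = 0)
    (hbal : ∑ i, lam i = ∑ i, lams i) :
    ((Finset.univ.filter (fun i : Fin n => lam i = τ * C)).card : ℝ) ≤ (1 - τ) * n ∧
    ((Finset.univ.filter (fun i : Fin n => lams i = (1 - τ) * C)).card : ℝ) ≤ τ * n :=
  abstract_quantile_counting_general n τ C hτ hC lam lams hlam hlams hcomp hbal
end
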